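/- arXiv:0811.4192 — 4 statements merged into one kernel-verified Lean document; each statement's English description precedes it below -/
import Mathlib

section
/- Inclusion–exclusion identity for tuples with strictly positive components: for all natural numbers n ≥ 1, k ≥ 1, and s ≥ 1, the sum over all tuples (i_1, ..., i_k) of natural numbers with every i_j ≥ 1 and i_1 + ... + i_k = s of the product C(n-1, i_1) · ... · C(n-1, i_k) equals, as an integer, C(k·(n-1), s) + Σ_{j=1}^{k-1} (-1)^j · C(k, j) · C((k-j)·(n-1), s). -/
/-!
With `m = n - 1`, the left-hand side is the coefficient of `X ^ s` in `((1 + X) ^ m - 1) ^ k`,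
because `(1 + X) ^ m - 1` has coefficients `C(m, i)` for `i ≥ 1` and `0` for `i = 0`.
Writing `(1 + X) ^ m - 1 = -1 + (1 + X) ^ m` and expanding by the binomial theorem gives
`∑ j, (-1) ^ j * C(k, j) * (1 + X) ^ ((k - j) * m)`, whose `X ^ s`-coefficient is the right-hand
side; the term `j = k` vanishes because `s ≥ 1`.
-/

open Finset Polynomial

theorem Finset.sum_finsuppAntidiag_eq_sum_piAntidiag {ι μ M : Type*} [DecidableEq ι]
    [AddCommMonoid μ] [HasAntidiagonal μ] [DecidableEq μ] [AddCommMonoid M]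
    (s : Finset ι) (n : μ) (g : (ι → μ) → M) :
    ∑ l ∈ finsuppAntidiag s n, g l = ∑ f ∈ piAntidiag s n, g f := by
  rw [finsuppAntidiag, sum_map]
  exact sum_attach (piAntidiag s n) g

theorem Polynomial.coeff_prod_eq_sum_piAntidiag {ι R : Type*} [DecidableEq ι] [CommSemiring R]
    (s : Finset ι) (p : ι → R[X]) (n : ℕ) :
    (∏ j ∈ s, p j).coeff n = ∑ f ∈ piAntidiag s n, ∏ j ∈ s, (p j).coeff (f j) := by
  simp only [← coeff_coe, ← coeToPowerSeries.ringHom_apply, map_prod, PowerSeries.coeff_prod]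
  exact sum_finsuppAntidiag_eq_sum_piAntidiag s n
    fun f => ∏ j ∈ s, PowerSeries.coeff (f j) (coeToPowerSeries.ringHom (p j))

theorem Polynomial.coeff_one_add_X_pow_sub_one {R : Type*} [Ring R] (m i : ℕ) :
    ((1 + X) ^ m - 1 : R[X]).coeff i = if 1 ≤ i then (m.choose i : R) else 0 := by
  rcases i with _ | i <;> simp [coeff_one, coeff_one_add_X_pow]

theorem Polynomial.coeff_one_add_X_pow_sub_one_pow {R : Type*} [CommRing R] (m k s : ℕ) :
    (((1 + X) ^ m - 1) ^ k : R[X]).coeff s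
      = ∑ j ∈ range (k + 1), (-1) ^ j * (k.choose j : R) * ((k - j) * m).choose s := by
  rw [sub_eq_neg_add, add_pow, finsetSum_coeff]
  refine sum_congr rfl fun j _ => ?_
  have h : ((-1) ^ j * (k.choose j : R[X])) = C ((-1 : R) ^ j * k.choose j) := by simp
  rw [← pow_mul, mul_comm m, mul_right_comm, h, coeff_C_mul, coeff_one_add_X_pow]

theorem sum_positive_antidiagonalTuple_prod_choose {R : Type*} [CommRing R] (m k s : ℕ) :
    ((∑ i ∈ (Nat.antidiagonalTuple k s).filter (fun i => ∀ j, 1 ≤ i j),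
        ∏ j, m.choose (i j) : ℕ) : R)
      = ∑ j ∈ range (k + 1), (-1) ^ j * (k.choose j : R) * ((k - j) * m).choose s := by
  rw [← coeff_one_add_X_pow_sub_one_pow, ← Fin.prod_const, coeff_prod_eq_sum_piAntidiag,
    piAntidiag_univ_fin_eq_antidiagonalTuple, sum_filter]
  push_cast
  simp only [coeff_one_add_X_pow_sub_one, prod_ite_zero, mem_univ, true_implies]

theorem positive_tuple_inclusion_exclusion_general (n k s : ℕ) (hs : 1 ≤ s) :
    ((∑ i ∈ (Finset.Nat.antidiagonalTuple k s).filter (fun i => ∀ j, 1 ≤ i j),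
        ∏ j, Nat.choose (n - 1) (i j) : ℕ) : ℤ)
      = (Nat.choose (k * (n - 1)) s : ℤ)
        + ∑ j ∈ Finset.Icc 1 (k - 1),
            (-1 : ℤ) ^ j * Nat.choose k j * Nat.choose ((k - j) * (n - 1)) s := by
  rw [sum_positive_antidiagonalTuple_prod_choose, sum_range_succ, Nat.sub_self, zero_mul,
    Nat.choose_eq_zero_of_lt hs, Nat.cast_zero, mul_zero, add_zero]
  rcases k with _ | k
  · simp [Nat.choose_eq_zero_of_lt hs]
  · rw [range_eq_Ico, sum_eq_sum_Ico_succ_bot k.add_one_pos, Ico_add_one_right_eq_Icc]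
    simp

/-- Inclusion–exclusion identity for tuples with strictly positive components:
for `n ≥ 1`, `k ≥ 1`, `s ≥ 1`, the sum over all tuples `(i_1, ..., i_k)` of
positive natural numbers with `i_1 + ... + i_k = s` of
`C(n-1, i_1) * ... * C(n-1, i_k)` equals, as an integer,
`C(k*(n-1), s) + Σ_{j=1}^{k-1} (-1)^j * C(k, j) * C((k-j)*(n-1), s)`. -/
theorem positive_tuple_inclusion_exclusion (n k s : ℕ)
    (hn : 1 ≤ n) (hk : 1 ≤ k) (hs : 1 ≤ s) :
    ((∑ i ∈ (Finset.Nat.antidiagonalTuple k s).filter (fun i => ∀ j, 1 ≤ i j),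
        ∏ j, Nat.choose (n - 1) (i j) : ℕ) : ℤ)
      = (Nat.choose (k * (n - 1)) s : ℤ)
        + ∑ j ∈ Finset.Icc 1 (k - 1),
            (-1 : ℤ) ^ j * Nat.choose k j * Nat.choose ((k - j) * (n - 1)) s :=
  positive_tuple_inclusion_exclusion_general n k s hs
end

section
/- Exact-occurrence decomposition: let α be a finite type with exactly n elements (n ≥ 1), let B be a subset of α with |B| = y, and let K be a subset of B with |K| = k. Then, for every natural number x, the number of subsets T of α × Fin (n-1) with |T| = x such that the set of elements a ∈ B occurring as a first coordinate of a pair in T is exactly K, equals the sum over all functions i : K → ℕ with every value i(a) ≥ 1 and Σ_{a ∈ K} i(a) ≤ x of the product (∏_{a ∈ K} C(n-1, i(a))) · C((n - y)·(n-1), x - Σ_{a ∈ K} i(a)). -/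
/-!
A set `T ⊆ α × β` whose elements of `B` occurring in it are exactly those of `K` is the disjoint
union of its fibres over `K`, which are arbitrary nonempty subsets of `β`, and of its part over
`Bᶜ`, an arbitrary subset of `Bᶜ × β`. Once the fibre sizes `i a` are fixed these choices are
independent, so there are `∏ C(|β|, i a) * C(|Bᶜ| |β|, x - Σ i a)` such `T` of size `x`;
summing over the possible fibre sizes gives the formula.
-/

open Finset

section Fibers

variable {α β : Type*} [DecidableEq α]

/- The instances deciding occurrence are arguments: for `β = Fin m` the statement decides
`∃ b : Fin m, _` by `Nat.decidableExistsFin`, not through `Fintype`. -/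
theorem filter_fst_mem_eq_of_filter_occurs_eq {B K : Finset α} {T : Finset (α × β)}
    [DecidablePred fun a => ∃ b, (a, b) ∈ T] (hKB : K ⊆ B)
    (hT : B.filter (fun a => ∃ b, (a, b) ∈ T) = K) :
    T.filter (·.1 ∈ B) = T.filter (·.1 ∈ K) := by
  refine filter_congr fun p hp => ⟨fun hpB => ?_, fun hpK => hKB hpK⟩
  rw [← hT, mem_filter]
  exact ⟨hpB, p.2, hp⟩

variable [DecidableEq β]

def prodFiber [Fintype β] (T : Finset (α × β)) (a : α) : Finset β :=
  univ.filter fun b => (a, b) ∈ T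

def ofFibers (K : Finset α) (g : K → Finset β) : Finset (α × β) :=
  K.attach.biUnion fun a => {(a : α)} ×ˢ g a

@[simp]
theorem mem_prodFiber [Fintype β] {T : Finset (α × β)} {a : α} {b : β} :
    b ∈ prodFiber T a ↔ (a, b) ∈ T := by
  simp [prodFiber]

theorem mem_ofFibers {K : Finset α} {g : K → Finset β} {p : α × β} :
    p ∈ ofFibers K g ↔ ∃ h : p.1 ∈ K, p.2 ∈ g ⟨p.1, h⟩ := by
  obtain ⟨a, b⟩ := p
  simp only [ofFibers, mem_biUnion, mem_attach, true_and, mem_product, mem_singleton]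
  constructor
  · rintro ⟨⟨c, hc⟩, rfl, hb⟩
    exact ⟨hc, hb⟩
  · rintro ⟨ha, hb⟩
    exact ⟨⟨a, ha⟩, rfl, hb⟩

theorem card_ofFibers (K : Finset α) (g : K → Finset β) :
    (ofFibers K g).card = ∑ a, (g a).card := by
  rw [ofFibers, card_biUnion, univ_eq_attach]
  · simp
  · intro a _ c _ hac
    simp only [Function.onFun, disjoint_left, mem_product, mem_singleton]
    exact fun p hp hp' => hac (Subtype.ext (hp.1.symm.trans hp'.1))

theorem ofFibers_prodFiber [Fintype β] (K : Finset α) (T : Finset (α × β)) :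
    ofFibers K (fun a => prodFiber T a) = T.filter (·.1 ∈ K) := by
  ext p
  simp [mem_ofFibers, and_comm]

section Gluing

variable {B K : Finset α} {g : K → Finset β} {R : Finset (α × β)}

theorem disjoint_ofFibers (hR : ∀ p ∈ R, p.1 ∉ K) : Disjoint (ofFibers K g) R :=
  disjoint_left.2 fun p hp hpR => hR p hpR (mem_ofFibers.1 hp).1

theorem prodFiber_ofFibers_union [Fintype β] (hR : ∀ p ∈ R, p.1 ∉ K) (a : K) :
    prodFiber (ofFibers K g ∪ R) a = g a := by
  ext b
  simp only [mem_prodFiber, mem_union, mem_ofFibers, a.2, exists_true_left, or_iff_left_iff_imp]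
  exact fun h => absurd a.2 (hR _ h)

theorem filter_ofFibers_union (hKB : K ⊆ B) (hR : ∀ p ∈ R, p.1 ∉ B) :
    (ofFibers K g ∪ R).filter (·.1 ∉ B) = R := by
  ext p
  simp only [mem_filter, mem_union, mem_ofFibers]
  constructor
  · rintro ⟨⟨hpK, -⟩ | hpR, hpB⟩
    exacts [absurd (hKB hpK) hpB, hpR]
  · exact fun hpR => ⟨Or.inr hpR, hR p hpR⟩

theorem filter_occurs_ofFibers_union [DecidablePred fun a => ∃ b, (a, b) ∈ ofFibers K g ∪ R]
    (hKB : K ⊆ B) (hg : ∀ a, (g a).Nonempty) (hR : ∀ p ∈ R, p.1 ∉ B) :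
    B.filter (fun a => ∃ b, (a, b) ∈ ofFibers K g ∪ R) = K := by
  ext a
  simp only [mem_filter, mem_union, mem_ofFibers]
  constructor
  · rintro ⟨haB, b, ⟨haK, -⟩ | hab⟩
    exacts [haK, absurd haB (hR _ hab)]
  · intro haK
    obtain ⟨b, hb⟩ := hg ⟨a, haK⟩
    exact ⟨hKB haK, b, Or.inl ⟨haK, hb⟩⟩

end Gluing

section Occurrence

variable [Fintype β] {B K : Finset α} {T : Finset (α × β)}
  [DecidablePred fun a => ∃ b, (a, b) ∈ T]

theorem ofFibers_prodFiber_union_filter_of_filter_occurs_eq (hKB : K ⊆ B)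
    (hT : B.filter (fun a => ∃ b, (a, b) ∈ T) = K) :
    ofFibers K (fun a => prodFiber T a) ∪ T.filter (·.1 ∉ B) = T := by
  rw [ofFibers_prodFiber, ← filter_fst_mem_eq_of_filter_occurs_eq hKB hT,
    filter_union_filter_not_eq]

theorem card_eq_sum_card_prodFiber_add_of_filter_occurs_eq (hKB : K ⊆ B)
    (hT : B.filter (fun a => ∃ b, (a, b) ∈ T) = K) :
    T.card = ∑ a : K, (prodFiber T a).card + (T.filter (·.1 ∉ B)).card := by
  rw [← card_ofFibers, ofFibers_prodFiber, ← filter_fst_mem_eq_of_filter_occurs_eq hKB hT,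
    card_filter_add_card_filter_not]

theorem one_le_card_prodFiber_of_filter_occurs_eq
    (hT : B.filter (fun a => ∃ b, (a, b) ∈ T) = K) (a : K) : 1 ≤ (prodFiber T a).card := by
  have ha : (a : α) ∈ B.filter (fun a => ∃ b, (a, b) ∈ T) := hT ▸ a.2
  obtain ⟨b, hb⟩ := (mem_filter.1 ha).2
  exact card_pos.2 ⟨b, mem_prodFiber.2 hb⟩

end Occurrence

end Fibers

theorem card_filter_prodFiber_card_eq {α β : Type*} [Fintype α] [DecidableEq α] [Fintype β]
    [DecidableEq β] [∀ T : Finset (α × β), DecidablePred fun a => ∃ b, (a, b) ∈ T]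
    {B K : Finset α} (hKB : K ⊆ B) {x : ℕ} {i : K → ℕ} (hi : ∀ a, 1 ≤ i a)
    (hx : ∑ a, i a ≤ x) :
    (univ.filter fun T : Finset (α × β) =>
        (T.card = x ∧ B.filter (fun a => ∃ b, (a, b) ∈ T) = K) ∧
          (fun a : K => (prodFiber T a).card) = i).card
      = (∏ a, (Fintype.card β).choose (i a)) *
          (Bᶜ.card * Fintype.card β).choose (x - ∑ a, i a) := by
  have hD : ((Fintype.piFinset fun a => powersetCard (i a) (univ : Finset β)) ×ˢ
      powersetCard (x - ∑ a, i a) (Bᶜ ×ˢ (univ : Finset β))).card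
        = (∏ a, (Fintype.card β).choose (i a)) *
            (Bᶜ.card * Fintype.card β).choose (x - ∑ a, i a) := by
    simp [card_powersetCard]
  rw [← hD]
  have mem_D {g : K → Finset β} {R : Finset (α × β)} :
      (g, R) ∈ (Fintype.piFinset fun a => powersetCard (i a) (univ : Finset β)) ×ˢ
        powersetCard (x - ∑ a, i a) (Bᶜ ×ˢ (univ : Finset β)) ↔
      (∀ a, (g a).card = i a) ∧ (∀ p ∈ R, p.1 ∉ B) ∧ R.card = x - ∑ a, i a := by
    simp [subset_iff]
  refine card_nbij' (fun T => (fun a => prodFiber T a, T.filter (·.1 ∉ B)))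
    (fun q => ofFibers K q.1 ∪ q.2) ?_ ?_ ?_ ?_
  · rintro T hT
    rw [mem_coe, mem_filter] at hT
    obtain ⟨-, ⟨hTx, hTK⟩, rfl⟩ := hT
    have := card_eq_sum_card_prodFiber_add_of_filter_occurs_eq hKB hTK
    rw [mem_coe, mem_D]
    exact ⟨fun a => rfl, fun p hp => (mem_filter.1 hp).2, by beta_reduce; omega⟩
  · rintro ⟨g, R⟩ hq
    rw [mem_coe, mem_D] at hq
    obtain ⟨hg, hR, hRx⟩ := hq
    have hRK : ∀ p ∈ R, p.1 ∉ K := fun p hp hpK => hR p hp (hKB hpK)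
    have hg_nonempty : ∀ a, (g a).Nonempty := fun a => card_pos.1 ((hg a).symm ▸ hi a)
    have hcard : (ofFibers K g ∪ R).card = x := by
      rw [card_union_of_disjoint (disjoint_ofFibers hRK), card_ofFibers,
        Fintype.sum_congr _ (fun a => i a) hg]
      omega
    rw [mem_coe, mem_filter]
    exact ⟨mem_univ _, ⟨hcard, filter_occurs_ofFibers_union hKB hg_nonempty hR⟩,
      funext fun a => by rw [prodFiber_ofFibers_union hRK, hg]⟩
  · rintro T hT
    rw [mem_coe, mem_filter] at hT
    exact ofFibers_prodFiber_union_filter_of_filter_occurs_eq hKB hT.2.1.2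
  · rintro ⟨g, R⟩ hq
    rw [mem_coe, mem_D] at hq
    have hRK : ∀ p ∈ R, p.1 ∉ K := fun p hp hpK => hq.2.1 p hp (hKB hpK)
    exact Prod.ext (funext (prodFiber_ofFibers_union hRK)) (filter_ofFibers_union hKB hq.2.1)

theorem exact_occurrence_decomposition_general
    {α : Type*} [Fintype α] [DecidableEq α]
    (n y x : ℕ) (hcard : Fintype.card α = n)
    (B : Finset α) (hB : B.card = y)
    (K : Finset α) (hKB : K ⊆ B) :
    ((Finset.univ : Finset (Finset (α × Fin (n - 1)))).filter
        (fun T => T.card = x ∧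
          B.filter (fun a => ∃ b : Fin (n - 1), (a, b) ∈ T) = K)).card
      = ∑ i ∈ (Fintype.piFinset fun _ : ↥K => Finset.range (x + 1)).filter
            (fun i => (∀ a : ↥K, 1 ≤ i a) ∧ ∑ a : ↥K, i a ≤ x),
          (∏ a : ↥K, Nat.choose (n - 1) (i a))
            * Nat.choose ((n - y) * (n - 1)) (x - ∑ a : ↥K, i a) := by
  have hprofile : ∀ T ∈ (univ : Finset (Finset (α × Fin (n - 1)))).filter
      (fun T => T.card = x ∧ B.filter (fun a => ∃ b : Fin (n - 1), (a, b) ∈ T) = K),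
      (fun a : K => (prodFiber T a).card) ∈ (Fintype.piFinset fun _ : K => range (x + 1)).filter
        (fun i => (∀ a : K, 1 ≤ i a) ∧ ∑ a : K, i a ≤ x) := by
    intro T hT
    obtain ⟨hTx, hTK⟩ := (mem_filter.1 hT).2
    have hsum := card_eq_sum_card_prodFiber_add_of_filter_occurs_eq hKB hTK
    have hle : ∑ a : K, (prodFiber T a).card ≤ x := by omega
    refine mem_filter.2 ⟨Fintype.mem_piFinset.2 fun a => mem_range.2 ?_,
      one_le_card_prodFiber_of_filter_occurs_eq hTK, hle⟩
    exact Nat.lt_succ_of_le ((single_le_sum (fun _ _ => Nat.zero_le _) (mem_univ a)).trans hle)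
  rw [card_eq_sum_card_fiberwise hprofile]
  refine sum_congr rfl fun i hi => ?_
  obtain ⟨hi_pos, hi_sum⟩ := (mem_filter.1 hi).2
  rw [filter_filter, card_filter_prodFiber_card_eq hKB hi_pos hi_sum, Fintype.card_fin,
    card_compl, hcard, hB]

/-- Exact-occurrence decomposition: let `α` be a finite type with `n ≥ 1`
elements, `B ⊆ α` with `|B| = y`, and `K ⊆ B` with `|K| = k`.  For every `x`,
the number of subsets `T` of `α × Fin (n-1)` with `|T| = x` whose set of
occurring elements of `B` (as first coordinates) is exactly `K` equals the sum
over all functions `i : K → ℕ` with every `i a ≥ 1` and `Σ_{a ∈ K} i a ≤ x` of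
`(∏_{a ∈ K} C(n-1, i a)) * C((n-y)*(n-1), x - Σ_{a ∈ K} i a)`. -/
theorem exact_occurrence_decomposition
    {α : Type*} [Fintype α] [DecidableEq α]
    (n y k x : ℕ) (hn : 1 ≤ n) (hcard : Fintype.card α = n)
    (B : Finset α) (hB : B.card = y)
    (K : Finset α) (hKB : K ⊆ B) (hK : K.card = k) :
    ((Finset.univ : Finset (Finset (α × Fin (n - 1)))).filter
        (fun T => T.card = x ∧
          B.filter (fun a => ∃ b : Fin (n - 1), (a, b) ∈ T) = K)).card
      = ∑ i ∈ (Fintype.piFinset fun _ : ↥K => Finset.range (x + 1)).filter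
            (fun i => (∀ a : ↥K, 1 ≤ i a) ∧ ∑ a : ↥K, i a ≤ x),
          (∏ a : ↥K, Nat.choose (n - 1) (i a))
            * Nat.choose ((n - y) * (n - 1)) (x - ∑ a : ↥K, i a) :=
  exact_occurrence_decomposition_general n y x hcard B hB K hKB
end

section
/- Main counting theorem (correctness of the occurrence-in-subtuple formula when y ≤ x): let α be a finite type with exactly n elements (n ≥ 1), let B be a subset of α with |B| = y, and let x, z be natural numbers with z ≥ 1 and y ≤ x. Then the number of subsets T of α × Fin (n-1) with |T| = x such that at least z elements of B occur as first coordinates of pairs in T equals Σ_{k=z}^{y} C(y, k) · Σ_{(i_1,...,i_k)} (∏_{j=1}^{k} C(n-1, i_j)) · C((n - y)·(n-1), x - (i_1 + ... + i_k)), where the inner sum ranges over all k-tuples of natural numbers with every i_j ≥ 1 and i_1 + ... + i_k ≤ x. -/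
/-!
Identify a finset `T ⊆ α × Fin (n-1)` with its family of fibres `a ↦ {b | (a, b) ∈ T}`: then
`|T|` is the sum of the fibre sizes and `a` occurs in `T` iff its fibre is nonempty. The fibres
over `Bᶜ` together form an arbitrary subset of `Bᶜ × Fin (n-1)`, which contributes
`C((n-y)(n-1), x - s)` once the fibres over `B` have total size `s`. The fibres over `B` are
grouped by the set of occurring elements, a `k`-subset of `B` chosen in `C(y, k)` ways; after
numbering it by `Fin k`, a family of nonempty fibres of sizes `i_1, …, i_k` arises in
`∏ C(n-1, i_j)` ways.
-/

open Finset

section Fibres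

variable {ι β : Type*} [Fintype ι] [DecidableEq ι] [Fintype β] [DecidableEq β]

def finsetProdEquivPi : Finset (ι × β) ≃ (ι → Finset β) where
  toFun T a := {b | (a, b) ∈ T}
  invFun f := {p | p.2 ∈ f p.1}
  left_inv T := by ext; simp
  right_inv f := by ext; simp

@[simp] lemma mem_finsetProdEquivPi {T : Finset (ι × β)} {a : ι} {b : β} :
    b ∈ finsetProdEquivPi T a ↔ (a, b) ∈ T := by
  simp [finsetProdEquivPi]

lemma card_eq_sum_card_finsetProdEquivPi (T : Finset (ι × β)) :
    #T = ∑ a, #(finsetProdEquivPi T a) := by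
  calc #T = ∑ p : ι × β, if p ∈ T then 1 else 0 := by simp
    _ = ∑ a, ∑ b, if (a, b) ∈ T then 1 else 0 := Fintype.sum_prod_type _
    _ = _ := by simp [finsetProdEquivPi]

lemma card_filter_sum_card_eq (m : ℕ) :
    #{f : ι → Finset β | ∑ a, #(f a) = m} = (Fintype.card ι * Fintype.card β).choose m := by
  rw [← Fintype.card_prod, ← card_univ, ← card_powersetCard]
  refine card_equiv finsetProdEquivPi.symm fun f => ?_
  simp [card_eq_sum_card_finsetProdEquivPi]

-- The decidability instance is an argument so that the lemma also matches `Nat.decidableExistsFin`.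
lemma card_filter_occurring_eq_card_filter_ne_empty (B : Finset ι) (x z : ℕ)
    [∀ T : Finset (ι × β), DecidablePred fun a => ∃ b, (a, b) ∈ T] :
    #{T : Finset (ι × β) | #T = x ∧ z ≤ #{a ∈ B | ∃ b, (a, b) ∈ T}}
      = #{f : ι → Finset β | ∑ a, #(f a) = x ∧ z ≤ #{a : B | f a ≠ ∅}} := by
  refine card_equiv finsetProdEquivPi fun T => ?_
  simp only [mem_filter, mem_univ, true_and, card_eq_sum_card_finsetProdEquivPi T]
  rw [card_filter, card_filter, ← sum_coe_sort B]
  simp [← nonempty_iff_ne_empty, Finset.Nonempty]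

lemma card_filter_sum_card_eq_sum_choose (B : Finset ι) (x : ℕ) (Q : (B → Finset β) → Prop)
    [DecidablePred Q] :
    #{f : ι → Finset β | ∑ a, #(f a) = x ∧ Q fun a => f a}
      = ∑ g : B → Finset β, if Q g ∧ ∑ a, #(g a) ≤ x then
          ((Fintype.card ι - #B) * Fintype.card β).choose (x - ∑ a, #(g a)) else 0 := by
  let e := Equiv.piEquivPiSubtypeProd (· ∈ B) fun _ => Finset β
  rw [card_filter, ← e.symm.sum_comp, Fintype.sum_prod_type]
  refine sum_congr rfl fun g _ => ?_
  have hsplit (h) : ∑ a, #(e.symm (g, h) a) = ∑ a, #(g a) + ∑ a, #(h a) := by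
    rw [← Fintype.sum_subtype_add_sum_subtype (· ∈ B)]
    congr 1 <;> refine sum_congr (by congr!) fun a _ => by simp [e, a.2]
  have hrestrict (h) : (fun a : B => e.symm (g, h) a) = g := funext fun a => by simp [e]
  simp only [hsplit, hrestrict, ← card_filter]
  by_cases hQ : Q g
  · have hcard : Fintype.card {a // a ∉ B} = Fintype.card ι - #B := by
      rw [Fintype.card_subtype_compl, Fintype.card_coe]
    split_ifs with hx
    · rw [← hcard, ← card_filter_sum_card_eq]
      congr 1
      ext h
      simp only [mem_filter, mem_univ, true_and, hQ, and_true]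
      omega
    · exact card_eq_zero.2 <| filter_eq_empty_iff.2 fun h _ hh => hx ⟨hQ, by omega⟩
  · simp [hQ]

end Fibres

section Supports

variable {ι R : Type*} [Fintype ι] [DecidableEq ι] [AddCommMonoid R]

lemma sum_filter_support_eq {M : Type*} [Fintype M] [DecidableEq M] (o : M) (S : Finset ι)
    (Ψ : (Fin #S → M) → R) :
    ∑ g : ι → M with ({a | g a ≠ o} : Finset ι) = S, Ψ (fun i => g (S.equivFin.symm i))
      = ∑ t : Fin #S → M with ∀ i, t i ≠ o, Ψ t := by
  refine sum_nbij' (fun g i => g (S.equivFin.symm i))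
    (fun t a => if h : a ∈ S then t (S.equivFin ⟨a, h⟩) else o) ?_ ?_ ?_ ?_ fun _ _ => rfl
  · simp only [mem_filter, mem_univ, true_and]
    intro g hg i
    simpa [← hg] using (S.equivFin.symm i).2
  · simp only [mem_filter, mem_univ, true_and]
    intro t ht
    ext a
    by_cases h : a ∈ S <;> simp [h, ht]
  · simp only [mem_filter, mem_univ, true_and]
    intro g hg
    funext a
    by_cases h : a ∈ S
    · simp [h]
    · have : g a = o := by simpa [← hg] using h
      simp [h, this]
  · intro t _
    funext i
    simp

variable {β : Type*} [Fintype β]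

lemma sum_filter_comp_card (s : Finset ℕ) (P : (ι → ℕ) → Prop) [DecidablePred P]
    (hP : ∀ t, P t → ∀ a, t a ∈ s) (Φ : (ι → ℕ) → R) :
    ∑ f : ι → Finset β with P (fun a => #(f a)), Φ (fun a => #(f a))
      = ∑ t ∈ Fintype.piFinset (fun _ => s) with P t,
          (∏ a, (Fintype.card β).choose (t a)) • Φ t := by
  rw [← sum_fiberwise_of_maps_to (s := {f : ι → Finset β | P fun a => #(f a)})
    (t := {t ∈ Fintype.piFinset (fun _ => s) | P t}) (g := fun f a => #(f a)) fun f hf => by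
      rw [mem_filter] at hf ⊢
      exact ⟨Fintype.mem_piFinset.2 (hP _ hf.2), hf.2⟩]
  refine sum_congr rfl fun t ht => ?_
  have hfibre : ({f ∈ {f : ι → Finset β | P fun a => #(f a)} | (fun a => #(f a)) = t} :
      Finset (ι → Finset β)) = Fintype.piFinset fun a => powersetCard (t a) univ := by
    ext f
    simp only [mem_filter, mem_univ, true_and, Fintype.mem_piFinset, mem_powersetCard_univ,
      funext_iff]
    exact ⟨fun h => h.2, fun h => ⟨(funext h ▸ (mem_filter.1 ht).2 :), h⟩⟩
  rw [sum_congr rfl fun f hf => congrArg Φ (mem_filter.1 hf).2, sum_const, hfibre,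
    Fintype.card_piFinset]
  simp

lemma sum_eq_sum_range_choose_sum_ne_empty [DecidableEq β] (Θ : ℕ → ℕ → R) :
    ∑ g : ι → Finset β, Θ #{a | g a ≠ ∅} (∑ a, #(g a))
      = ∑ k ∈ range (Fintype.card ι + 1), (Fintype.card ι).choose k •
          ∑ t : Fin k → Finset β with ∀ i, t i ≠ ∅, Θ k (∑ i, #(t i)) := by
  rw [← sum_fiberwise_of_maps_to (t := univ) (g := fun g => ({a | g a ≠ ∅} : Finset ι))
    fun _ _ => mem_univ _, ← card_univ, ← sum_powerset_apply_card, powerset_univ]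
  refine sum_congr rfl fun S _ => ?_
  rw [← sum_filter_support_eq ∅ S fun t => Θ #S (∑ i, #(t i))]
  refine sum_congr rfl fun g hg => ?_
  have hsupp : ({a | g a ≠ ∅} : Finset ι) = S := (mem_filter.1 hg).2
  have hsum : ∑ a, #(g a) = ∑ i, #(g (S.equivFin.symm i)) := by
    rw [← sum_subset (subset_univ S) fun a _ ha => by simpa [← hsupp] using ha, ← sum_coe_sort,
      ← S.equivFin.symm.sum_comp]
  rw [hsupp, hsum]

-- The decidability instances are arguments so that the lemma also matches `Nat.decidableForallFin`.
lemma sum_filter_ne_empty_eq_sum_piFinset [DecidablePred fun t : ι → Finset β => ∀ i, t i ≠ ∅]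
    [DecidablePred fun u : ι → ℕ => ∀ i, 1 ≤ u i] (x : ℕ) (F : ℕ → R) :
    ∑ t : ι → Finset β with ∀ i, t i ≠ ∅, (if ∑ i, #(t i) ≤ x then F (∑ i, #(t i)) else 0)
      = ∑ u ∈ Fintype.piFinset (fun _ : ι => range (x + 1)) with (∀ i, 1 ≤ u i) ∧ ∑ i, u i ≤ x,
          (∏ i, (Fintype.card β).choose (u i)) • F (∑ i, u i) := by
  have hP (u : ι → ℕ) (hu : (∀ i, 1 ≤ u i) ∧ ∑ i, u i ≤ x) (i : ι) : u i ∈ range (x + 1) :=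
    mem_range.2 <| Nat.lt_succ_of_le <|
      (single_le_sum (fun _ _ => Nat.zero_le _) (mem_univ i)).trans hu.2
  rw [← sum_filter_comp_card _ _ hP fun u => F (∑ i, u i), ← sum_filter, filter_filter]
  refine sum_congr (filter_congr fun t _ => ?_) fun _ _ => rfl
  simp [one_le_card, nonempty_iff_ne_empty]

end Supports

theorem occurrence_in_subtuple_count_general
    {α : Type*} [Fintype α] [DecidableEq α]
    (n x y z : ℕ)
    (hcard : Fintype.card α = n)
    (B : Finset α) (hB : B.card = y) :
    ((Finset.univ : Finset (Finset (α × Fin (n - 1)))).filter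
        (fun T => T.card = x ∧
          z ≤ (B.filter (fun a => ∃ b : Fin (n - 1), (a, b) ∈ T)).card)).card
      = ∑ k ∈ Finset.Icc z y, Nat.choose y k *
          ∑ i ∈ (Fintype.piFinset fun _ : Fin k => Finset.range (x + 1)).filter
              (fun i => (∀ j, 1 ≤ i j) ∧ ∑ j, i j ≤ x),
            (∏ j, Nat.choose (n - 1) (i j))
              * Nat.choose ((n - y) * (n - 1)) (x - ∑ j, i j) := by
  have hIcc : ({k ∈ range (y + 1) | z ≤ k} : Finset ℕ) = Icc z y := by
    ext k
    simp only [mem_filter, mem_range, mem_Icc]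
    omega
  rw [card_filter_occurring_eq_card_filter_ne_empty,
    card_filter_sum_card_eq_sum_choose B x fun g => z ≤ #{a | g a ≠ ∅}, hcard, hB,
    Fintype.card_fin, sum_eq_sum_range_choose_sum_ne_empty fun k s =>
      if z ≤ k ∧ s ≤ x then ((n - y) * (n - 1)).choose (x - s) else 0,
    Fintype.card_coe, hB, ← hIcc, sum_filter]
  refine sum_congr rfl fun k _ => ?_
  split_ifs with hk
  · simp only [hk, true_and]
    rw [sum_filter_ne_empty_eq_sum_piFinset x fun s => ((n - y) * (n - 1)).choose (x - s),
      Fintype.card_fin]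
    simp only [smul_eq_mul]
  · simp [hk]

/-- Main counting theorem (correctness of the occurrence-in-subtuple formula
when `y ≤ x`): let `α` be a finite type with `n ≥ 1` elements and `B ⊆ α` with
`|B| = y`.  For `z ≥ 1` and `y ≤ x`, the number of subsets `T` of
`α × Fin (n-1)` with `|T| = x` such that at least `z` elements of `B` occur as
first coordinates of pairs of `T` equals
`Σ_{k=z}^{y} C(y,k) * Σ_{(i_1,...,i_k)} (∏_j C(n-1, i_j)) *
  C((n-y)*(n-1), x - (i_1 + ... + i_k))`,
where the inner sum ranges over all `k`-tuples of positive natural numbers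
with `i_1 + ... + i_k ≤ x`. -/
theorem occurrence_in_subtuple_count
    {α : Type*} [Fintype α] [DecidableEq α]
    (n x y z : ℕ) (hn : 1 ≤ n) (hz : 1 ≤ z) (hyx : y ≤ x)
    (hcard : Fintype.card α = n)
    (B : Finset α) (hB : B.card = y) :
    ((Finset.univ : Finset (Finset (α × Fin (n - 1)))).filter
        (fun T => T.card = x ∧
          z ≤ (B.filter (fun a => ∃ b : Fin (n - 1), (a, b) ∈ T)).card)).card
      = ∑ k ∈ Finset.Icc z y, Nat.choose y k *
          ∑ i ∈ (Fintype.piFinset fun _ : Fin k => Finset.range (x + 1)).filter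
              (fun i => (∀ j, 1 ≤ i j) ∧ ∑ j, i j ≤ x),
            (∏ j, Nat.choose (n - 1) (i j))
              * Nat.choose ((n - y) * (n - 1)) (x - ∑ j, i j) :=
  occurrence_in_subtuple_count_general n x y z hcard B hB
end

section
/- Fast form of the main counting theorem: let α be a finite type with exactly n elements (n ≥ 1), let B be a subset of α with |B| = y, and let x, z be natural numbers with z ≥ 1 and y ≤ x. Then the number of subsets T of α × Fin (n-1) with |T| = x such that at least z elements of B occur as first coordinates of pairs in T equals, as an integer, Σ_{k=z}^{y} C(y, k) · Σ_{s=k}^{x} ( C(k·(n-1), s) + Σ_{j=1}^{k-1} (-1)^j · C(k, j) · C((k-j)·(n-1), s) ) · C((n - y)·(n-1), x - s). -/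
/-!
Group the subsets `T` according to the set `S = B ∩ π₁(T)` of elements of `B` occurring in `T`.
For fixed `S`, a set `T` with this trace is the disjoint union of a subset of `S × Fin (n-1)` that
meets every row `{a} × Fin (n-1)`, `a ∈ S`, and an arbitrary subset of `Bᶜ × Fin (n-1)`.
Inclusion–exclusion over the rows that are missed shows that `S × Fin (n-1)` has
`Σ_j (-1)^j C(|S|, j) C((|S| - j)(n-1), s)` such subsets of size `s`. This depends only on
`k = |S|`, which produces the factor `C(y, k)`, and since `s ≥ k` the term `j = k` vanishes.
-/

open Finset

theorem sum_powerset_filter_le_card {α M : Type*} [AddCommMonoid M] (B : Finset α) (z : ℕ)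
    (f : Finset α → M) :
    ∑ S ∈ B.powerset with z ≤ #S, f S
      = ∑ k ∈ Icc z #B, ∑ S ∈ powersetCard k B, f S := by
  rw [← sum_fiberwise_of_maps_to (g := card) (t := Icc z #B) fun S hS => ?_]
  · refine sum_congr rfl fun k hk => sum_congr ?_ fun _ _ => rfl
    rw [filter_filter, powersetCard_eq_filter]
    exact filter_congr fun S _ => ⟨fun h => h.2, fun h => ⟨h ▸ (mem_Icc.1 hk).1, h⟩⟩
  · rw [mem_filter, mem_powerset] at hS
    exact mem_Icc.2 ⟨hS.2, card_le_card hS.1⟩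

theorem card_filter_le_card_eq_sum_powerset {α ι : Type*} [DecidableEq α] (s : Finset ι)
    (f : ι → Finset α) {B : Finset α} (hf : ∀ i ∈ s, f i ⊆ B) (z : ℕ) :
    #{i ∈ s | z ≤ #(f i)} = ∑ S ∈ B.powerset with z ≤ #S, #{i ∈ s | f i = S} := by
  rw [card_eq_sum_card_fiberwise (f := f) (t := {S ∈ B.powerset | z ≤ #S}) fun i hi => ?_]
  · refine sum_congr rfl fun S hS => ?_
    rw [filter_filter]
    refine congrArg card (filter_congr fun i _ => ?_)
    exact and_iff_right_of_imp fun h => h ▸ (mem_filter.1 hS).2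
  · simp only [coe_filter, Set.mem_ofPred_eq] at hi
    simp [hf i hi.1, hi.2]

theorem sum_powerset_filter_disjoint_neg_one_pow {α : Type*} [DecidableEq α] (S X : Finset α) :
    ∑ J ∈ S.powerset with Disjoint J X, (-1 : ℤ) ^ #J = if S ⊆ X then 1 else 0 := by
  have hpow : {J ∈ S.powerset | Disjoint J X} = (S \ X).powerset := by
    ext J
    simp only [mem_filter, mem_powerset, subset_sdiff]
  rw [hpow, sum_powerset_neg_one_pow_card]
  simp only [sdiff_eq_empty_iff_subset]

section DisjointUnion

variable {γ : Type*} [DecidableEq γ] {U V : Finset γ}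

theorem union_inter_eq_of_subset_of_disjoint {A C : Finset γ} (hA : A ⊆ U) (hC : Disjoint C U) :
    (A ∪ C) ∩ U = A := by
  rw [union_inter_distrib_right, inter_eq_left.2 hA, disjoint_iff_inter_eq_empty.1 hC, union_empty]

variable (P : Finset γ → Prop) [DecidablePred P]

theorem card_filter_powersetCard_union_of_card_inter (hUV : Disjoint U V) {s x : ℕ}
    (hsx : s ≤ x) :
    #{T ∈ powersetCard x (U ∪ V) | #(T ∩ U) = s ∧ P (T ∩ U)}
      = #{A ∈ powersetCard s U | P A} * (#V).choose (x - s) := by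
  rw [← card_powersetCard (x - s) V, ← card_product]
  refine card_nbij' (fun T => (T ∩ U, T ∩ V)) (fun p => p.1 ∪ p.2) ?_ ?_ ?_ ?_ <;>
    simp only [Set.MapsTo, Set.LeftInvOn, coe_filter, coe_product, Set.mem_prod,
      mem_coe, mem_powersetCard, Set.mem_ofPred_eq, Prod.forall, Prod.mk.injEq, and_imp]
  · rintro T hTUV rfl rfl hP
    have hsplit : #T = #(T ∩ U) + #(T ∩ V) := by
      rw [← card_union_of_disjoint (hUV.mono inter_subset_right inter_subset_right),
        ← inter_union_distrib_left, inter_eq_left.2 hTUV]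
    exact ⟨⟨⟨inter_subset_right, rfl⟩, hP⟩, inter_subset_right, by omega⟩
  · rintro A C hAU rfl hP hCV hC
    rw [union_inter_eq_of_subset_of_disjoint hAU (hUV.symm.mono_left hCV),
      card_union_of_disjoint (hUV.mono hAU hCV)]
    exact ⟨⟨union_subset_union hAU hCV, by omega⟩, rfl, hP⟩
  · intro T hTUV _ _ _
    rw [← inter_union_distrib_left, inter_eq_left.2 hTUV]
  · intro A C hAU _ _ hCV _
    exact ⟨union_inter_eq_of_subset_of_disjoint hAU (hUV.symm.mono_left hCV),
      union_comm A C ▸ union_inter_eq_of_subset_of_disjoint hCV (hUV.mono_left hAU)⟩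

theorem card_filter_powersetCard_union (hUV : Disjoint U V) (x : ℕ) :
    #{T ∈ powersetCard x (U ∪ V) | P (T ∩ U)}
      = ∑ s ∈ range (x + 1), #{A ∈ powersetCard s U | P A} * (#V).choose (x - s) := by
  rw [card_eq_sum_card_fiberwise (f := fun T => #(T ∩ U)) (t := range (x + 1)) fun T hT => ?_]
  · refine sum_congr rfl fun s hs => ?_
    rw [filter_filter, ← card_filter_powersetCard_union_of_card_inter P hUV
      (mem_range_succ_iff.1 hs)]
    simp only [and_comm]
  · simp only [coe_filter, mem_powersetCard, Set.mem_ofPred_eq] at hT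
    exact mem_range_succ_iff.2 (hT.1.2 ▸ card_le_card inter_subset_left)

end DisjointUnion

section Occurrence

variable {α β : Type*} [DecidableEq α] [Fintype β]

theorem filter_powersetCard_disjoint_image_fst {S J : Finset α} (s : ℕ) :
    {A ∈ powersetCard s (S ×ˢ (univ : Finset β)) | Disjoint J (A.image Prod.fst)}
      = powersetCard s ((S \ J) ×ˢ univ) := by
  ext A
  simp only [mem_filter, mem_powersetCard, subset_iff, mem_product, mem_sdiff, mem_univ, and_true,
    disjoint_right, mem_image, forall_exists_index, and_imp, Prod.forall]
  grind

theorem card_filter_powersetCard_subset_image_fst (S : Finset α) (s : ℕ) :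
    (#{A ∈ powersetCard s (S ×ˢ (univ : Finset β)) | S ⊆ A.image Prod.fst} : ℤ)
      = ∑ j ∈ range (#S + 1),
          (-1 : ℤ) ^ j * (#S).choose j * ((#S - j) * Fintype.card β).choose s := by
  calc (#{A ∈ powersetCard s (S ×ˢ (univ : Finset β)) | S ⊆ A.image Prod.fst} : ℤ)
      = ∑ A ∈ powersetCard s (S ×ˢ (univ : Finset β)),
          ∑ J ∈ S.powerset, if Disjoint J (A.image Prod.fst) then (-1 : ℤ) ^ #J else 0 := by
        simp only [natCast_card_filter, ← sum_filter, sum_powerset_filter_disjoint_neg_one_pow]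
    _ = ∑ J ∈ S.powerset, (-1 : ℤ) ^ #J
          * #{A ∈ powersetCard s (S ×ˢ (univ : Finset β)) |
              Disjoint J (A.image Prod.fst)} := by
        rw [sum_comm]
        simp only [natCast_card_filter, mul_sum, mul_ite, mul_one, mul_zero]
    _ = ∑ J ∈ S.powerset, (-1 : ℤ) ^ #J * ((#S - #J) * Fintype.card β).choose s := by
        refine sum_congr rfl fun J hJ => ?_
        rw [filter_powersetCard_disjoint_image_fst, card_powersetCard, card_product,
          card_sdiff_of_subset (mem_powerset.1 hJ), card_univ]
    _ = _ := by
        rw [sum_powerset_apply_card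
          (fun j => (-1 : ℤ) ^ j * ((#S - j) * Fintype.card β).choose s)]
        simp only [nsmul_eq_mul, mul_assoc, mul_left_comm]

theorem filter_powersetCard_subset_image_fst_eq_empty {S : Finset α} {s : ℕ} (hs : s < #S) :
    {A ∈ powersetCard s (S ×ˢ (univ : Finset β)) | S ⊆ A.image Prod.fst} = ∅ := by
  refine filter_eq_empty_iff.2 fun A hA hSA => ?_
  have := (card_le_card hSA).trans card_image_le
  rw [(mem_powersetCard.1 hA).2] at this
  omega

theorem filter_powersetCard_inter_image_fst_eq [Fintype α] [DecidableEq β] {B S : Finset α}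
    (hSB : S ⊆ B) (x : ℕ) :
    {T ∈ powersetCard x (univ : Finset (α × β)) | B ∩ T.image Prod.fst = S}
      = {T ∈ powersetCard x (S ×ˢ univ ∪ Bᶜ ×ˢ (univ : Finset β)) |
          S ⊆ (T ∩ S ×ˢ univ).image Prod.fst} := by
  ext T
  simp only [mem_filter, mem_powersetCard, subset_iff, mem_union, mem_product, mem_compl, mem_univ,
    and_true, mem_inter, mem_image, Prod.exists, exists_and_right, exists_eq_right, Finset.ext_iff]
  grind

theorem card_filter_powersetCard_inter_image_fst_eq [Fintype α] [DecidableEq β] {B S : Finset α}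
    (hSB : S ⊆ B) (x : ℕ) :
    (#{T ∈ powersetCard x (univ : Finset (α × β)) | B ∩ T.image Prod.fst = S} : ℤ)
      = ∑ s ∈ Icc #S x, (∑ j ∈ range (#S + 1),
          (-1 : ℤ) ^ j * (#S).choose j * ((#S - j) * Fintype.card β).choose s)
          * ((Fintype.card α - #B) * Fintype.card β).choose (x - s) := by
  have hdisj : Disjoint (S ×ˢ (univ : Finset β)) (Bᶜ ×ˢ univ) :=
    disjoint_product.2 (Or.inl (disjoint_compl_right_iff.2 hSB))
  rw [filter_powersetCard_inter_image_fst_eq hSB,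
    card_filter_powersetCard_union (fun A => S ⊆ A.image Prod.fst) hdisj,
    card_product, card_compl, card_univ, Nat.cast_sum,
    ← sum_subset (s₁ := Icc #S x) fun s hs => mem_range_succ_iff.2 (mem_Icc.1 hs).2]
  · refine sum_congr rfl fun s _ => ?_
    push_cast
    rw [card_filter_powersetCard_subset_image_fst]
  · intro s hs hsS
    simp only [mem_range, mem_Icc, not_and, not_le] at hs hsS
    rw [filter_powersetCard_subset_image_fst_eq_empty (by omega), card_empty, zero_mul,
      Nat.cast_zero]

end Occurrence

theorem sum_range_alternating_eq_choose_add_sum_Icc (m : ℕ) {k s : ℕ} (hks : k ≤ s) :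
    ∑ j ∈ range (k + 1), (-1 : ℤ) ^ j * k.choose j * ((k - j) * m).choose s
      = (k * m).choose s
        + ∑ j ∈ Icc 1 (k - 1), (-1 : ℤ) ^ j * k.choose j * ((k - j) * m).choose s := by
  rcases k with _ | k
  · simp
  have hlast : ((k + 1 - (k + 1)) * m).choose s = 0 := by
    rw [Nat.sub_self, zero_mul, Nat.choose_eq_zero_of_lt (by omega)]
  rw [sum_range_succ, hlast, sum_range_succ', Nat.add_sub_cancel, ← Ico_add_one_right_eq_Icc,
    sum_Ico_eq_sum_range, Nat.add_sub_cancel]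
  simp [add_comm]

theorem occurrence_in_subtuple_count_fast_general
    {α : Type*} [Fintype α] [DecidableEq α]
    (n x y z : ℕ)
    (hcard : Fintype.card α = n)
    (B : Finset α) (hB : B.card = y) :
    ((((Finset.univ : Finset (Finset (α × Fin (n - 1)))).filter
        (fun T => T.card = x ∧
          z ≤ (B.filter (fun a => ∃ b : Fin (n - 1), (a, b) ∈ T)).card)).card : ℕ) : ℤ)
      = ∑ k ∈ Finset.Icc z y, (Nat.choose y k : ℤ) *
          ∑ s ∈ Finset.Icc k x,
            ((Nat.choose (k * (n - 1)) s : ℤ)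
              + ∑ j ∈ Finset.Icc 1 (k - 1),
                  (-1 : ℤ) ^ j * Nat.choose k j * Nat.choose ((k - j) * (n - 1)) s)
              * Nat.choose ((n - y) * (n - 1)) (x - s) := by
  have hocc (T : Finset (α × Fin (n - 1))) :
      B.filter (fun a => ∃ b : Fin (n - 1), (a, b) ∈ T) = B ∩ T.image Prod.fst := by
    ext a
    simp
  have hset : univ.filter (fun T : Finset (α × Fin (n - 1)) =>
        #T = x ∧ z ≤ #(B.filter fun a => ∃ b, (a, b) ∈ T))
      = {T ∈ powersetCard x (univ : Finset (α × Fin (n - 1))) |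
          z ≤ #(B ∩ T.image Prod.fst)} := by
    simp only [hocc, powersetCard_eq_filter, powerset_univ, filter_filter]
  rw [hset, card_filter_le_card_eq_sum_powerset _ _ (fun T _ => inter_subset_left),
    sum_powerset_filter_le_card, Nat.cast_sum, hB]
  refine sum_congr rfl fun k _ => ?_
  rw [Nat.cast_sum, sum_congr rfl fun S hS => by
      rw [card_filter_powersetCard_inter_image_fst_eq (mem_powersetCard.1 hS).1 x,
        (mem_powersetCard.1 hS).2],
    sum_const, card_powersetCard, hB, hcard, Fintype.card_fin, nsmul_eq_mul]
  refine congrArg _ (sum_congr rfl fun s hs => ?_)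
  rw [sum_range_alternating_eq_choose_add_sum_Icc _ (mem_Icc.1 hs).1]

/-- Fast form of the main counting theorem: let `α` be a finite type with
`n ≥ 1` elements and `B ⊆ α` with `|B| = y`.  For `z ≥ 1` and `y ≤ x`, the
number of subsets `T` of `α × Fin (n-1)` with `|T| = x` such that at least `z`
elements of `B` occur as first coordinates of pairs of `T` equals, as an
integer,
`Σ_{k=z}^{y} C(y,k) * Σ_{s=k}^{x} (C(k*(n-1), s) +
  Σ_{j=1}^{k-1} (-1)^j * C(k,j) * C((k-j)*(n-1), s)) * C((n-y)*(n-1), x-s)`. -/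
theorem occurrence_in_subtuple_count_fast
    {α : Type*} [Fintype α] [DecidableEq α]
    (n x y z : ℕ) (hn : 1 ≤ n) (hz : 1 ≤ z) (hyx : y ≤ x)
    (hcard : Fintype.card α = n)
    (B : Finset α) (hB : B.card = y) :
    ((((Finset.univ : Finset (Finset (α × Fin (n - 1)))).filter
        (fun T => T.card = x ∧
          z ≤ (B.filter (fun a => ∃ b : Fin (n - 1), (a, b) ∈ T)).card)).card : ℕ) : ℤ)
      = ∑ k ∈ Finset.Icc z y, (Nat.choose y k : ℤ) *
          ∑ s ∈ Finset.Icc k x,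
            ((Nat.choose (k * (n - 1)) s : ℤ)
              + ∑ j ∈ Finset.Icc 1 (k - 1),
                  (-1 : ℤ) ^ j * Nat.choose k j * Nat.choose ((k - j) * (n - 1)) s)
              * Nat.choose ((n - y) * (n - 1)) (x - s) :=
  occurrence_in_subtuple_count_fast_general n x y z hcard B hB
end
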